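/- Up to isomorphism of extensions (with arbitrary isomorphisms on the kernel and quotient), there are exactly three extensions of ℤ/2 by ℤ: (1) 1 → ℤ → ℤ × ℤ/2 → ℤ/2 → 1; (2) 1 → ℤ →×2 ℤ → ℤ/2 → 1; (3) 1 → ℤ → ℤ ⋊_{(-1)} ℤ/2 → ℤ/2 → 1. In particular, every group A fitting into a short exact sequence 1 → ℤ → A → ℤ/2 → 1 is isomorphic to ℤ × ℤ/2, ℤ, or ℤ ⋊_{(-1)} ℤ/2. -/

import Mathlib

/-- The negation automorphism of `ℤ` (written multiplicatively). -/
def negAut : MulAut (Multiplicative ℤ) := MulEquiv.inv (Multiplicative ℤ)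

/-- The action of `ℤ/2` on `ℤ` by negation. -/
def negAction : Multiplicative (ZMod 2) →* MulAut (Multiplicative ℤ) where
  toFun g := negAut ^ (Multiplicative.toAdd g).val
  map_one' := by
    show negAut ^ (0 : ZMod 2).val = 1
    simp [ZMod.val_zero]
  map_mul' a b := by
    have h2 : negAut ^ 2 = 1 := by
      ext x
      show x⁻¹⁻¹ = x
      simp
    show negAut ^ (Multiplicative.toAdd a + Multiplicative.toAdd b).val = _
    rw [ZMod.val_add, ← pow_eq_pow_mod _ h2, pow_add]

/-- The infinite dihedral group `ℤ ⋊ ℤ/2`. -/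
abbrev InfDihedral := Multiplicative ℤ ⋊[negAction] Multiplicative (ZMod 2)

/-- `A` is the middle term of a short exact sequence `1 → ℤ → A → ℤ/2 → 1`. -/
def IsExtensionOfZ2ByZ (A : Type) [Group A] : Prop :=
  ∃ (i : Multiplicative ℤ →* A) (d : A →* Multiplicative (ZMod 2)),
    Function.Injective i ∧ Function.Surjective d ∧ d.ker = i.range

/-!
Let `t ∈ A` lift the generator of `ℤ/2`. Conjugation by `t` restricts to an automorphism of
`ℤ`, hence to `±1`, and `t² = i w` for some `w ∈ ℤ`. If it is `-1`, then `w` is fixed by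
negation because `t` commutes with `t²`, so `t² = 1`: the extension splits with the sign
action and `A` is dihedral. If it is `+1`, then `t` centralises `i ℤ`, and writing `w = 2r` or
`w = 2r + 1` the lift `s = i (-r) * t` has `s² = 1` (the extension splits trivially,
`A ≅ ℤ × ℤ/2`) or `s² = i 1`, in which case `n ↦ sⁿ` is a morphism from the extension
`ℤ →×2 ℤ → ℤ/2`, hence an isomorphism. The three groups are told apart by commutativity and
torsion.
-/

open Multiplicative

theorem Multiplicative.zmodTwo_eq_one_or_eq_ofAdd_one (g : Multiplicative (ZMod 2)) :
    g = 1 ∨ g = ofAdd 1 := by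
  revert g; decide

theorem MonoidHom.ext_zmodTwo {M : Type*} [Monoid M] {f g : Multiplicative (ZMod 2) →* M}
    (h : f (ofAdd 1) = g (ofAdd 1)) : f = g := by
  refine MonoidHom.ext fun x => ?_
  obtain rfl | rfl := Multiplicative.zmodTwo_eq_one_or_eq_ofAdd_one x
  · rw [map_one, map_one]
  · exact h

theorem Multiplicative.zmodTwo_sq_eq_one (g : Multiplicative (ZMod 2)) : g ^ 2 = 1 := by
  revert g; decide

def zmodTwoHom {G : Type*} [Monoid G] (s : G) (hs : s ^ 2 = 1) :
    Multiplicative (ZMod 2) →* G where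
  toFun g := s ^ (toAdd g).val
  map_one' := pow_zero s
  map_mul' a b := by
    show s ^ (toAdd a + toAdd b).val = _
    rw [ZMod.val_add, ← pow_eq_pow_mod _ hs, pow_add]

theorem zmodTwoHom_ofAdd_one {G : Type*} [Monoid G] (s : G) (hs : s ^ 2 = 1) :
    zmodTwoHom s hs (ofAdd 1) = s :=
  pow_one s

theorem MulAut.eq_one_or_eq_negAut (e : MulAut (Multiplicative ℤ)) : e = 1 ∨ e = negAut := by
  rcases Int.addEquiv_eq_refl_or_neg (MulEquiv.toAdditive e) with h | h
  · left; ext x; exact congrArg ofAdd (DFunLike.congr_fun h x.toAdd)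
  · right; ext x; exact congrArg ofAdd (DFunLike.congr_fun h x.toAdd)

theorem negAction_ofAdd_one : negAction (ofAdd 1) = negAut := pow_one negAut

theorem MonoidHom.eq_one_or_eq_negAction
    (φ : Multiplicative (ZMod 2) →* MulAut (Multiplicative ℤ)) :
    φ = 1 ∨ φ = negAction := by
  rcases (φ (ofAdd 1)).eq_one_or_eq_negAut with h | h
  · exact Or.inl (MonoidHom.ext_zmodTwo h)
  · exact Or.inr (MonoidHom.ext_zmodTwo (h.trans negAction_ofAdd_one.symm))

theorem SemidirectProduct.nonempty_mulEquiv_prod_or_infDihedral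
    (φ : Multiplicative (ZMod 2) →* MulAut (Multiplicative ℤ)) :
    Nonempty (Multiplicative ℤ ⋊[φ] Multiplicative (ZMod 2) ≃*
        Multiplicative ℤ × Multiplicative (ZMod 2)) ∨
      Nonempty (Multiplicative ℤ ⋊[φ] Multiplicative (ZMod 2) ≃* InfDihedral) := by
  obtain rfl | rfl := φ.eq_one_or_eq_negAction
  · exact Or.inl ⟨mulEquivProd⟩
  · exact Or.inr ⟨.refl _⟩

theorem isExtensionOfZ2ByZ_iff (A : Type) [Group A] :
    IsExtensionOfZ2ByZ A ↔
      Nonempty (GroupExtension (Multiplicative ℤ) A (Multiplicative (ZMod 2))) :=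
  ⟨fun ⟨i, d, hi, hd, hker⟩ => ⟨⟨i, d, hi, hker.symm, hd⟩⟩,
    fun ⟨S⟩ => ⟨S.inl, S.rightHom, S.inl_injective, S.rightHom_surjective,
      S.range_inl_eq_ker_rightHom.symm⟩⟩

theorem isExtensionOfZ2ByZ_prod :
    IsExtensionOfZ2ByZ (Multiplicative ℤ × Multiplicative (ZMod 2)) := by
  refine ⟨MonoidHom.inl _ _, MonoidHom.snd _ _, Prod.mk_left_injective 1,
    fun g => ⟨(1, g), rfl⟩, ?_⟩
  ext ⟨x, y⟩
  simp [MonoidHom.mem_range, Prod.ext_iff, eq_comm, Subgroup.mem_prod]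

def intDoublingExtension :
    GroupExtension (Multiplicative ℤ) (Multiplicative ℤ) (Multiplicative (ZMod 2)) where
  inl := powMonoidHom 2
  rightHom := (Int.castAddHom (ZMod 2)).toMultiplicative
  inl_injective a b h := by
    have : 2 * toAdd a = 2 * toAdd b := congrArg toAdd h
    exact toAdd.injective (by omega)
  range_inl_eq_ker_rightHom := by
    ext a
    rw [MonoidHom.mem_range, MonoidHom.mem_ker, ← toAdd.injective.eq_iff]
    change (∃ b : Multiplicative ℤ, 2 * toAdd b = toAdd a) ↔ ((toAdd a : ℤ) : ZMod 2) = 0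
    rw [ZMod.intCast_zmod_eq_zero_iff_dvd]
    exact ⟨fun ⟨b, hb⟩ => ⟨toAdd b, hb.symm⟩, fun ⟨b, hb⟩ => ⟨ofAdd b, hb.symm⟩⟩
  rightHom_surjective g := ⟨ofAdd (toAdd g).val, by simp⟩

namespace GroupExtension

variable {A : Type*} [Group A] (S : GroupExtension (Multiplicative ℤ) A (Multiplicative (ZMod 2)))

theorem sq_mem_range_inl (t : A) : t ^ 2 ∈ S.inl.range := by
  rw [S.range_inl_eq_ker_rightHom, MonoidHom.mem_ker, map_pow,
    Multiplicative.zmodTwo_sq_eq_one]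

def splittingOfSqEqOne (s : A) (hs : S.rightHom s = ofAdd 1) (hs2 : s ^ 2 = 1) :
    S.Splitting where
  toMonoidHom := zmodTwoHom s hs2
  rightInverse_rightHom := DFunLike.congr_fun
    (MonoidHom.ext_zmodTwo (f := S.rightHom.comp (zmodTwoHom s hs2)) (g := .id _)
      (by rw [MonoidHom.comp_apply, zmodTwoHom_ofAdd_one, hs, MonoidHom.id_apply]))

theorem nonempty_mulEquiv_of_sq_eq_one (s : A) (hs : S.rightHom s = ofAdd 1) (hs2 : s ^ 2 = 1) :
    Nonempty (A ≃* Multiplicative ℤ × Multiplicative (ZMod 2)) ∨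
      Nonempty (A ≃* InfDihedral) := by
  have e := (S.splittingOfSqEqOne s hs hs2).semidirectProductMulEquiv.symm
  exact (SemidirectProduct.nonempty_mulEquiv_prod_or_infDihedral _).imp
    (fun ⟨f⟩ => ⟨e.trans f⟩) (fun ⟨f⟩ => ⟨e.trans f⟩)

noncomputable def mulEquivIntOfSqEqInl (s : A) (hs : S.rightHom s = ofAdd 1)
    (hs2 : s ^ 2 = S.inl (ofAdd 1)) : A ≃* Multiplicative ℤ :=
  (Equiv.ofMonoidHom (S := intDoublingExtension) (zpowersHom A s)
    (MonoidHom.ext_mint (by simpa [intDoublingExtension] using hs2))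
    (MonoidHom.ext_mint (by simpa [intDoublingExtension] using hs))).toMulEquiv.symm

theorem sq_eq_one_of_conjAct_eq_negAut (t : A) (h : S.conjAct t = negAut) : t ^ 2 = 1 := by
  obtain ⟨w, hw⟩ := S.sq_mem_range_inl t
  have hfix : S.conjAct t w = w := S.inl_injective (by rw [inl_conjAct_comm, hw]; group)
  rw [h] at hfix
  have hw1 : w = 1 := by
    have hneg : -toAdd w = toAdd w := congrArg toAdd hfix
    exact toAdd.injective (by rw [toAdd_one]; omega)
  rw [← hw, hw1, map_one]

theorem exists_lift_sq_eq_one_or_eq_inl_one_of_conjAct_eq_one (t : A) (ht : S.rightHom t = ofAdd 1)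
    (h : S.conjAct t = 1) :
    ∃ s, S.rightHom s = ofAdd 1 ∧ (s ^ 2 = 1 ∨ s ^ 2 = S.inl (ofAdd 1)) := by
  have hcomm (n : Multiplicative ℤ) : Commute (S.inl n) t := by
    have := S.inl_conjAct_comm (e := t) (n := n)
    rw [h, MulAut.one_apply, eq_mul_inv_iff_mul_eq] at this
    exact this
  obtain ⟨w, hw⟩ := S.sq_mem_range_inl t
  obtain ⟨r, hr⟩ := Int.even_or_odd' (toAdd w)
  refine ⟨S.inl (ofAdd (-r)) * t, by rw [map_mul, rightHom_inl, ht, one_mul], ?_⟩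
  have hsq : (S.inl (ofAdd (-r)) * t) ^ 2 = S.inl (ofAdd (toAdd w - 2 * r)) := by
    rw [(hcomm _).mul_pow, ← hw, ← map_pow, ← map_mul]
    congr 1
    apply toAdd.injective
    simp only [toAdd_mul, toAdd_pow, toAdd_ofAdd]
    ring
  rcases hr with hr | hr
  · exact .inl (by rw [hsq, hr, show 2 * r - 2 * r = 0 by ring, ofAdd_zero, map_one])
  · exact .inr (by rw [hsq, hr, show 2 * r + 1 - 2 * r = 1 by ring])

theorem exists_lift_sq_eq_one_or_eq_inl_one :
    ∃ s, S.rightHom s = ofAdd 1 ∧ (s ^ 2 = 1 ∨ s ^ 2 = S.inl (ofAdd 1)) := by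
  obtain ⟨t, ht⟩ := S.rightHom_surjective (ofAdd 1)
  rcases (S.conjAct t).eq_one_or_eq_negAut with h | h
  · exact S.exists_lift_sq_eq_one_or_eq_inl_one_of_conjAct_eq_one t ht h
  · exact ⟨t, ht, .inl (S.sq_eq_one_of_conjAct_eq_negAut t h)⟩

end GroupExtension

theorem GroupExtension.nonempty_mulEquiv_prod_or_int_or_infDihedral {A : Type*} [Group A]
    (S : GroupExtension (Multiplicative ℤ) A (Multiplicative (ZMod 2))) :
    Nonempty (A ≃* Multiplicative ℤ × Multiplicative (ZMod 2)) ∨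
      Nonempty (A ≃* Multiplicative ℤ) ∨ Nonempty (A ≃* InfDihedral) := by
  obtain ⟨s, hs, hs2 | hs2⟩ := S.exists_lift_sq_eq_one_or_eq_inl_one
  · exact (S.nonempty_mulEquiv_of_sq_eq_one s hs hs2).imp_right .inr
  · exact .inr (.inl ⟨S.mulEquivIntOfSqEqInl s hs hs2⟩)

theorem not_isMulTorsionFree_zmodTwo : ¬ IsMulTorsionFree (Multiplicative (ZMod 2)) :=
  fun h => absurd (h.pow_left_injective two_ne_zero (a₁ := ofAdd 1) (a₂ := 1) (by decide))
    (by decide)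

theorem not_nonempty_mulEquiv_prod_zmodTwo (G H : Type*) [Group G] [Group H]
    [IsMulTorsionFree H] : ¬ Nonempty (G × Multiplicative (ZMod 2) ≃* H) :=
  fun ⟨e⟩ => not_isMulTorsionFree_zmodTwo <|
    (e.injective.comp (Prod.mk_right_injective 1)).isMulTorsionFree
      (e.toMonoidHom.comp (MonoidHom.inr _ _))

theorem InfDihedral.not_isMulCommutative : ¬ IsMulCommutative InfDihedral := by
  intro h
  have := congrArg (fun p : InfDihedral => toAdd p.left)
    (mul_comm' (SemidirectProduct.inl (ofAdd (1 : ℤ)) : InfDihedral)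
      (SemidirectProduct.inr (ofAdd 1)))
  simp [negAction_ofAdd_one, negAut] at this

theorem InfDihedral.not_nonempty_mulEquiv_of_commGroup (G : Type*) [CommGroup G] :
    ¬ Nonempty (G ≃* InfDihedral) :=
  fun ⟨e⟩ => InfDihedral.not_isMulCommutative
    (Function.Surjective.mul_comm (f := e.toMulHom) e.surjective inferInstance)

/-- Up to isomorphism there are exactly three extensions of
`ℤ/2` by `ℤ`: each of `ℤ × ℤ/2`, `ℤ` and `ℤ ⋊₋₁ ℤ/2` occurs as the middle
group of such an extension, every middle group is isomorphic to one of these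
three, and the three are pairwise non-isomorphic. -/
theorem extensions_of_Z2_by_Z_classification :
    IsExtensionOfZ2ByZ (Multiplicative ℤ × Multiplicative (ZMod 2)) ∧
    IsExtensionOfZ2ByZ (Multiplicative ℤ) ∧
    IsExtensionOfZ2ByZ InfDihedral ∧
    (∀ (A : Type) [Group A], IsExtensionOfZ2ByZ A →
      Nonempty (A ≃* Multiplicative ℤ × Multiplicative (ZMod 2)) ∨
      Nonempty (A ≃* Multiplicative ℤ) ∨
      Nonempty (A ≃* InfDihedral)) ∧
    ¬ Nonempty (Multiplicative ℤ × Multiplicative (ZMod 2) ≃* Multiplicative ℤ) ∧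
    ¬ Nonempty (Multiplicative ℤ × Multiplicative (ZMod 2) ≃* InfDihedral) ∧
    ¬ Nonempty (Multiplicative ℤ ≃* InfDihedral) := by
  refine ⟨isExtensionOfZ2ByZ_prod,
    (isExtensionOfZ2ByZ_iff _).2 ⟨intDoublingExtension⟩,
    (isExtensionOfZ2ByZ_iff _).2 ⟨SemidirectProduct.toGroupExtension negAction⟩,
    fun A _ h => ?_, not_nonempty_mulEquiv_prod_zmodTwo _ _,
    InfDihedral.not_nonempty_mulEquiv_of_commGroup _,
    InfDihedral.not_nonempty_mulEquiv_of_commGroup _⟩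
  obtain ⟨S⟩ := (isExtensionOfZ2ByZ_iff A).1 h
  exact S.nonempty_mulEquiv_prod_or_int_or_infDihedral
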